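/- Switch structure of the optimal multicast policy in the uniform case (Theorem 1 of the paper): let V : 𝒬 → ℝ be monotone. If content u minimizes the state-action cost at state Q, i.e., J_V(Q, u) ≤ J_V(Q, v) for all v ∈ Fin M, and Q u < N u, then u still minimizes the state-action cost at Q + e_u, i.e., J_V(Q + e_u, u) ≤ J_V(Q + e_u, v) for all v ∈ Fin M. Consequently, for fixed values of the other queues, the set of queue lengths Q_u at which content u is optimal is upward closed (a threshold/switch structure). -/

import Mathlib

open Finset

/-- State space of the uniform-channel multicast MDP: request queue vectors capped by `N`. -/
def QSpace (M : ℕ) (N : Fin M → ℕ) : Type :=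
  {Q : Fin M → ℕ // ∀ m, Q m ≤ N m}

/-- Next state when content `u` is multicast in state `Q` and arrival `a` occurs. -/
def nextQ {M : ℕ} {N : Fin M → ℕ} (Q : QSpace M N) (u : Fin M) (a : Fin M → ℕ) :
    QSpace M N :=
  ⟨fun m => min ((if m = u then 0 else Q.1 m) + a m) (N m), fun _ => min_le_right _ _⟩

/-- Per-stage cost in the uniform case. -/
noncomputable def gCost {M : ℕ} {N : Fin M → ℕ} (wp wf : ℝ) (p f : Fin M → ℝ)
    (Q : QSpace M N) (u : Fin M) : ℝ :=
  (∑ m, (Q.1 m : ℝ)) + wp * p u + wf * f u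

/-- State-action cost function `J_V(Q,u)`. -/
noncomputable def JCost {M : ℕ} {N : Fin M → ℕ} (𝒜 : Finset (Fin M → ℕ))
    (ρ : (Fin M → ℕ) → ℝ) (wp wf : ℝ) (p f : Fin M → ℝ)
    (V : QSpace M N → ℝ) (Q : QSpace M N) (u : Fin M) : ℝ :=
  gCost wp wf p f Q u + ∑ a ∈ 𝒜, ρ a * V (nextQ Q u a)

/-- The state `Q + e_u`: component `u` is increased by 1 (requires `Q u < N u`). -/
def addE {M : ℕ} {N : Fin M → ℕ} (Q : QSpace M N) (u : Fin M) (h : Q.1 u < N u) :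
    QSpace M N :=
  ⟨Function.update Q.1 u (Q.1 u + 1), by
    intro m
    rcases eq_or_ne m u with rfl | hm
    · simp only [Function.update_self]; exact h
    · simp only [Function.update_of_ne hm]; exact Q.2 m⟩

/-!
Serving `u` empties queue `u`, so the next state after serving `u` from `Q + e_u` is the same as
from `Q`: the extra request raises `J_V(·, u)` by exactly the unit holding cost. For any other
content `v` the extra request raises the holding cost by one as well, and can only raise the
successor states, hence (by monotonicity of `V`) the expected future cost.
-/

section

variable {M : ℕ} {N : Fin M → ℕ}

theorem nextQ_addE_self (Q : QSpace M N) (u : Fin M) (h : Q.1 u < N u) (a : Fin M → ℕ) :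
    nextQ (addE Q u h) u a = nextQ Q u a := by
  apply Subtype.ext
  funext m
  rcases eq_or_ne m u with rfl | hm
  · simp [nextQ]
  · simp [nextQ, addE, hm]

theorem nextQ_mono {Q₁ Q₂ : QSpace M N} (hQ : Q₁.1 ≤ Q₂.1) (v : Fin M) (a : Fin M → ℕ) :
    (nextQ Q₁ v a).1 ≤ (nextQ Q₂ v a).1 := by
  intro m
  refine min_le_min (Nat.add_le_add_right ?_ _) le_rfl
  split_ifs
  · exact le_rfl
  · exact hQ m

theorem le_addE (Q : QSpace M N) (u : Fin M) (h : Q.1 u < N u) : Q.1 ≤ (addE Q u h).1 := by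
  intro m
  rcases eq_or_ne m u with rfl | hm
  · simp [addE]
  · simp [addE, hm]

theorem gCost_addE (wp wf : ℝ) (p f : Fin M → ℝ) (Q : QSpace M N) (u : Fin M)
    (h : Q.1 u < N u) (w : Fin M) :
    gCost wp wf p f (addE Q u h) w = gCost wp wf p f Q w + 1 := by
  have hcoord : ∀ m, ((addE Q u h).1 m : ℝ) = (Q.1 m : ℝ) + if m = u then 1 else 0 := by
    intro m
    rcases eq_or_ne m u with rfl | hm
    · simp [addE]
    · simp [addE, hm]
  simp only [gCost, hcoord, sum_add_distrib, sum_ite_eq', mem_univ, if_true]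
  ring

theorem expectedValue_mono (𝒜 : Finset (Fin M → ℕ)) (ρ : (Fin M → ℕ) → ℝ)
    (hρ0 : ∀ a ∈ 𝒜, 0 ≤ ρ a) (V : QSpace M N → ℝ)
    (hV : ∀ Q₁ Q₂ : QSpace M N, Q₁.1 ≤ Q₂.1 → V Q₁ ≤ V Q₂)
    {Q₁ Q₂ : QSpace M N} (hQ : Q₁.1 ≤ Q₂.1) (v : Fin M) :
    ∑ a ∈ 𝒜, ρ a * V (nextQ Q₁ v a) ≤ ∑ a ∈ 𝒜, ρ a * V (nextQ Q₂ v a) :=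
  sum_le_sum fun a ha => mul_le_mul_of_nonneg_left (hV _ _ (nextQ_mono hQ v a)) (hρ0 a ha)

variable (𝒜 : Finset (Fin M → ℕ)) (ρ : (Fin M → ℕ) → ℝ) (wp wf : ℝ) (p f : Fin M → ℝ)
  (V : QSpace M N → ℝ)

theorem JCost_addE_self (Q : QSpace M N) (u : Fin M) (h : Q.1 u < N u) :
    JCost 𝒜 ρ wp wf p f V (addE Q u h) u = JCost 𝒜 ρ wp wf p f V Q u + 1 := by
  simp only [JCost, gCost_addE, nextQ_addE_self]
  ring

theorem JCost_add_one_le_JCost_addE (hρ0 : ∀ a ∈ 𝒜, 0 ≤ ρ a)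
    (hV : ∀ Q₁ Q₂ : QSpace M N, Q₁.1 ≤ Q₂.1 → V Q₁ ≤ V Q₂)
    (Q : QSpace M N) (u : Fin M) (h : Q.1 u < N u) (v : Fin M) :
    JCost 𝒜 ρ wp wf p f V Q v + 1 ≤ JCost 𝒜 ρ wp wf p f V (addE Q u h) v := by
  have hfuture := expectedValue_mono 𝒜 ρ hρ0 V hV (le_addE Q u h) v
  simp only [JCost, gCost_addE]
  linarith

end

theorem optimal_policy_switch_structure_general
    {M : ℕ} (N : Fin M → ℕ)
    (𝒜 : Finset (Fin M → ℕ)) (ρ : (Fin M → ℕ) → ℝ)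
    (hρ0 : ∀ a ∈ 𝒜, 0 ≤ ρ a)
    (wp wf : ℝ) (p f : Fin M → ℝ)
    (V : QSpace M N → ℝ)
    (hV : ∀ Q₁ Q₂ : QSpace M N, Q₁.1 ≤ Q₂.1 → V Q₁ ≤ V Q₂) :
    ∀ (Q : QSpace M N) (u : Fin M) (h : Q.1 u < N u),
      (∀ v : Fin M, JCost 𝒜 ρ wp wf p f V Q u ≤ JCost 𝒜 ρ wp wf p f V Q v) →
      ∀ v : Fin M,
        JCost 𝒜 ρ wp wf p f V (addE Q u h) u ≤ JCost 𝒜 ρ wp wf p f V (addE Q u h) v := by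
  intro Q u h hmin v
  calc JCost 𝒜 ρ wp wf p f V (addE Q u h) u
      = JCost 𝒜 ρ wp wf p f V Q u + 1 := JCost_addE_self 𝒜 ρ wp wf p f V Q u h
    _ ≤ JCost 𝒜 ρ wp wf p f V Q v + 1 := by linarith [hmin v]
    _ ≤ JCost 𝒜 ρ wp wf p f V (addE Q u h) v :=
      JCost_add_one_le_JCost_addE 𝒜 ρ wp wf p f V hρ0 hV Q u h v

/-- Switch structure of the optimal policy in the uniform case (Theorem 1): if a
monotone value function `V` is such that content `u` minimizes the state-action cost
at `Q`, then `u` still minimizes the state-action cost at `Q + e_u`. -/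
theorem optimal_policy_switch_structure
    {M : ℕ} (hM : 1 ≤ M) (N : Fin M → ℕ)
    (𝒜 : Finset (Fin M → ℕ)) (ρ : (Fin M → ℕ) → ℝ)
    (hρ0 : ∀ a ∈ 𝒜, 0 ≤ ρ a) (hρ1 : ∑ a ∈ 𝒜, ρ a = 1)
    (wp wf : ℝ) (p f : Fin M → ℝ)
    (V : QSpace M N → ℝ)
    (hV : ∀ Q₁ Q₂ : QSpace M N, Q₁.1 ≤ Q₂.1 → V Q₁ ≤ V Q₂) :
    ∀ (Q : QSpace M N) (u : Fin M) (h : Q.1 u < N u),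
      (∀ v : Fin M, JCost 𝒜 ρ wp wf p f V Q u ≤ JCost 𝒜 ρ wp wf p f V Q v) →
      ∀ v : Fin M,
        JCost 𝒜 ρ wp wf p f V (addE Q u h) u ≤ JCost 𝒜 ρ wp wf p f V (addE Q u h) v :=
  optimal_policy_switch_structure_general N 𝒜 ρ hρ0 wp wf p f V hV
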